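/- arXiv:2208.08384 — 2 statements merged into one kernel-verified Lean document; each statement's English description precedes it below -/
import Mathlib

section
/- Minimal relaxation of a finally interval can always be one-sided: suppose a signal sat : ℤ → Prop satisfies sat at some time point, a ≤ b are integers, and let T* = min over all pairs (τ₁, τ₂) of nonnegative integers such that ∃ t ∈ [a - τ₁, b + τ₂], sat t, of the value max(τ₁, τ₂). Then there exists a minimizing pair (τ₁, τ₂) with max(τ₁, τ₂) = T* such that τ₁ = 0 or τ₂ = 0. -/
/-- A relaxation pair `(τ₁, τ₂)` is feasible for the finally task on `[a,b]`
if the signal satisfies the predicate somewhere in `[a - τ₁, b + τ₂]`. -/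
def FeasiblePair (sat : ℤ → Prop) (a b : ℤ) (τ₁ τ₂ : ℕ) : Prop :=
  ∃ t ∈ Set.Icc (a - (τ₁ : ℤ)) (b + (τ₂ : ℤ)), sat t

theorem finally_minimal_relaxation_one_sided (sat : ℤ → Prop) (a b : ℤ)
    (hab : a ≤ b) (hsat : ∃ t₀, sat t₀) (Tstar : ℕ)
    (hattained : ∃ τ₁ τ₂ : ℕ, FeasiblePair sat a b τ₁ τ₂ ∧ max τ₁ τ₂ = Tstar)
    (hmin : ∀ τ₁ τ₂ : ℕ, FeasiblePair sat a b τ₁ τ₂ → Tstar ≤ max τ₁ τ₂) :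
    ∃ τ₁ τ₂ : ℕ, FeasiblePair sat a b τ₁ τ₂ ∧ max τ₁ τ₂ = Tstar ∧
      (τ₁ = 0 ∨ τ₂ = 0) := by
  obtain ⟨τ₁, τ₂, ⟨t, ⟨ht1, ht2⟩, hts⟩, hmax⟩ := hattained
  rcases le_or_gt t b with htb | hbt
  · refine ⟨τ₁, 0, ⟨t, ⟨ht1, by simpa using htb⟩, hts⟩, ?_, Or.inr rfl⟩
    have h1 : Tstar ≤ max τ₁ 0 := hmin τ₁ 0 ⟨t, ⟨ht1, by simpa using htb⟩, hts⟩
    have h2 : τ₁ ≤ Tstar := hmax ▸ le_max_left _ _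
    simp only [Nat.max_zero] at h1 ⊢
    omega
  · have hat : a - (0:ℤ) ≤ t := by omega
    refine ⟨0, τ₂, ⟨t, ⟨hat, ht2⟩, hts⟩, ?_, Or.inl rfl⟩
    have h1 : Tstar ≤ max 0 τ₂ := hmin 0 τ₂ ⟨t, ⟨hat, ht2⟩, hts⟩
    have h2 : τ₂ ≤ Tstar := hmax ▸ le_max_right _ _
    simp only [Nat.zero_max] at h1 ⊢
    omega
end

section
/- Characterization of the satisfaction counter and globally satisfaction: with sat : ℤ → Prop decidable and the consecutive-satisfaction counter defined forward from a with l₁(a-1)=0 and l₁(t) = if sat t then l₁(t-1)+1 else 0 for t ≥ a, the globally specification holds on [a,b] (i.e., ∀ t ∈ [a,b], sat t) if and only if l₁(b) ≥ b - a + 1. -/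
/-- Consecutive-satisfaction counter started forward from `a` with
`l₁(a-1) = 0`: `leftCounter sat a n` equals `l₁(a - 1 + n)`. -/
def leftCounter (sat : ℤ → Prop) [DecidablePred sat] (a : ℤ) : ℕ → ℕ
  | 0 => 0
  | n + 1 => if sat (a + (n : ℤ)) then leftCounter sat a n + 1 else 0

lemma leftCounter_le (sat : ℤ → Prop) [DecidablePred sat] (a : ℤ) (n : ℕ) :
    leftCounter sat a n ≤ n := by
  induction n with
  | zero => simp [leftCounter]
  | succ n ih =>
    unfold leftCounter
    split <;> omega

lemma leftCounter_eq_iff (sat : ℤ → Prop) [DecidablePred sat] (a : ℤ) (n : ℕ) :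
    leftCounter sat a n = n ↔ ∀ k < n, sat (a + (k : ℤ)) := by
  induction n with
  | zero => simp [leftCounter]
  | succ n ih =>
    unfold leftCounter
    constructor
    · intro h
      split at h
      · intro k hk
        rcases Nat.lt_succ_iff_lt_or_eq.mp hk with hk | hk
        · exact (ih.mp (by omega)) k hk
        · subst hk; assumption
      · omega
    · intro h
      rw [if_pos (h n (Nat.lt_succ_self n))]
      rw [ih.mpr fun k hk => h k (hk.trans (Nat.lt_succ_self n))]

theorem globally_iff_counter (sat : ℤ → Prop) [DecidablePred sat] (a b : ℤ)
    (hab : a ≤ b) :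
    (∀ t ∈ Set.Icc a b, sat t) ↔
      b - a + 1 ≤ (leftCounter sat a ((b - a + 1).toNat) : ℤ) := by
  set n := (b - a + 1).toNat with hn
  have hn' : (n : ℤ) = b - a + 1 := Int.toNat_of_nonneg (by omega)
  have hle := leftCounter_le sat a n
  constructor
  · intro h
    have heq : leftCounter sat a n = n := by
      rw [leftCounter_eq_iff]
      intro k hk
      refine h (a + k) ⟨by omega, ?_⟩
      have : (k : ℤ) < n := by exact_mod_cast hk
      omega
    omega
  · intro h
    have heq : leftCounter sat a n = n := by omega
    intro t ht
    obtain ⟨h1, h2⟩ := ht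
    have hk : ((t - a).toNat : ℤ) = t - a := Int.toNat_of_nonneg (by omega)
    have := (leftCounter_eq_iff sat a n).mp heq (t - a).toNat (by omega)
    rwa [show a + ((t - a).toNat : ℤ) = t by omega] at this
end
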